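/- arXiv:2511.11199 — 5 statements merged into one kernel-verified Lean document; each statement's English description precedes it below -/
import Mathlib

section
/- For every complex number s with real part β > 0, the derivative of the Dirichlet eta function satisfies |η'(s)| ≤ |s|/β² + 1/β, where η'(s) = -Σ_{n=1}^∞ (-1)^{n+1} (ln n) n^{-s}. -/
/-!
With `f x = log x · x^(-s)` we have `η'(s) = ∑ (-1)^n f n`. Its partial sums of even length are
the partial sums of `∑ₖ (f (2k) - f (2k+1))`, and those of odd length differ from them by a term
`f (2k) → 0`. For `x ≥ 1`, `‖f' x‖ ≤ g x := (1 + ‖s‖ log x) x^(-β-1)`, so each pair is bounded by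
`∫_{2k}^{2k+1} g`; hence the paired series converges absolutely and its sum is bounded by
`∫_1^∞ g = 1/β + ‖s‖/β²`.
-/

open Filter Topology Finset Set

theorem Filter.Tendsto.of_even_odd {α : Type*} {l : Filter α} {u : ℕ → α}
    (h₀ : Tendsto (fun m => u (2 * m)) atTop l) (h₁ : Tendsto (fun m => u (2 * m + 1)) atTop l) :
    Tendsto u atTop l := by
  intro U hU
  obtain ⟨M₀, hM₀⟩ := eventually_atTop.1 (h₀ hU)
  obtain ⟨M₁, hM₁⟩ := eventually_atTop.1 (h₁ hU)
  refine eventually_atTop.2 ⟨2 * (M₀ + M₁), fun n hn => ?_⟩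
  obtain ⟨m, rfl | rfl⟩ := Nat.even_or_odd' n
  exacts [hM₀ m (by omega), hM₁ m (by omega)]

section AlternatingSums

variable {R : Type*} [Ring R]

theorem sum_range_two_mul_neg_one_pow_mul (a : ℕ → R) (m : ℕ) :
    ∑ n ∈ range (2 * m), (-1) ^ n * a n = ∑ k ∈ range m, (a (2 * k) - a (2 * k + 1)) := by
  induction m with
  | zero => simp
  | succ m ih =>
    rw [mul_add_one, sum_range_succ, sum_range_succ, sum_range_succ, ih, pow_succ, pow_mul]
    simp only [neg_one_sq, one_pow, one_mul, mul_neg_one, neg_mul]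
    abel

theorem tendsto_sum_range_neg_one_pow_mul_of_hasSum [TopologicalSpace R]
    [IsTopologicalAddGroup R] {a : ℕ → R} {L : R} (ha : Tendsto a atTop (𝓝 0))
    (hL : HasSum (fun k => a (2 * k) - a (2 * k + 1)) L) :
    Tendsto (fun N => ∑ n ∈ range N, (-1) ^ n * a n) atTop (𝓝 L) := by
  have heven : Tendsto (fun m => ∑ n ∈ range (2 * m), (-1) ^ n * a n) atTop (𝓝 L) := by
    simpa only [sum_range_two_mul_neg_one_pow_mul] using hL.tendsto_sum_nat
  refine heven.of_even_odd ?_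
  have ha_even : Tendsto (fun m => a (2 * m)) atTop (𝓝 0) :=
    ha.comp (strictMono_mul_left_of_pos two_pos).tendsto_atTop
  simpa [sum_range_succ, pow_mul] using heven.add ha_even

end AlternatingSums

theorem exists_hasSum_norm_le_of_sum_range_norm_le {E : Type*} [NormedAddCommGroup E]
    [CompleteSpace E] {b : ℕ → E} {C : ℝ} (h : ∀ m, ∑ k ∈ range m, ‖b k‖ ≤ C) :
    ∃ L, HasSum b L ∧ ‖L‖ ≤ C := by
  have hb : Summable fun k => ‖b k‖ := summable_of_sum_range_le (fun _ => norm_nonneg _) h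
  exact ⟨_, hb.of_norm.hasSum, (norm_tsum_le_tsum_norm hb).trans (hb.tsum_le_of_sum_range_le h)⟩

theorem sum_range_sub_le_of_monotoneOn {G : ℝ → ℝ} {x₀ : ℝ} (hG : MonotoneOn G (Ici x₀))
    (m : ℕ) : ∑ k ∈ range m, (G (x₀ + 2 * k + 1) - G (x₀ + 2 * k)) ≤ G (x₀ + 2 * m) - G x₀ := by
  induction m with
  | zero => simp
  | succ m ih =>
    have hstep : G (x₀ + 2 * m + 1) ≤ G (x₀ + 2 * (m + 1 : ℕ)) := by
      have hm : (0 : ℝ) ≤ m := m.cast_nonneg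
      push_cast
      exact hG (Set.mem_Ici.2 (by linarith)) (Set.mem_Ici.2 (by linarith)) (by linarith)
    rw [sum_range_succ]
    linarith

theorem norm_sub_le_sub_of_norm_deriv_le {E : Type*} [NormedAddCommGroup E] [NormedSpace ℝ E]
    {f f' : ℝ → E} {G g : ℝ → ℝ} {u v : ℝ} (huv : u ≤ v)
    (hf : ∀ x ∈ Icc u v, HasDerivAt f (f' x) x) (hG : ∀ x ∈ Icc u v, HasDerivAt G (g x) x)
    (hbound : ∀ x ∈ Icc u v, ‖f' x‖ ≤ g x) : ‖f v - f u‖ ≤ G v - G u := by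
  refine image_norm_le_of_norm_deriv_right_le_deriv_boundary' (f := fun x => f x - f u)
    (B := fun x => G x - G u) (fun x hx => (hf x hx).continuousAt.continuousWithinAt.sub_const _)
    (fun x hx => ((hf x (Ico_subset_Icc_self hx)).hasDerivWithinAt.sub_const _)) (by simp)
    (fun x hx => (hG x hx).continuousAt.continuousWithinAt.sub_const _)
    (fun x hx => ((hG x (Ico_subset_Icc_self hx)).hasDerivWithinAt.sub_const _))
    (fun x hx => hbound x (Ico_subset_Icc_self hx)) (right_mem_Icc.2 huv)

noncomputable def logMulCpow (s : ℂ) (x : ℝ) : ℂ := Real.log x * (x : ℂ) ^ (-s)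

theorem hasDerivAt_logMulCpow (s : ℂ) {x : ℝ} (hx : 0 < x) :
    HasDerivAt (logMulCpow s) ((1 - s * Real.log x) * (x : ℂ) ^ (-s - 1)) x := by
  have hlog : HasDerivAt (fun y : ℝ => (Real.log y : ℂ)) (x⁻¹ : ℝ) x :=
    (Real.hasDerivAt_log hx.ne').ofReal_comp
  have hcpow : HasDerivAt (fun y : ℝ => (y : ℂ) ^ (-s)) (-s * (x : ℂ) ^ (-s - 1)) x :=
    (Complex.hasStrictDerivAt_cpow_const
      (Complex.ofReal_mem_slitPlane.2 hx)).hasDerivAt.comp_ofReal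
  refine (hlog.mul hcpow).congr_deriv ?_
  have hx' : (x : ℂ) ≠ 0 := Complex.ofReal_ne_zero.2 hx.ne'
  rw [sub_eq_add_neg (-s), Complex.cpow_add _ _ hx', Complex.cpow_neg_one]
  push_cast
  ring

theorem norm_deriv_logMulCpow_le (s : ℂ) {x : ℝ} (hx : 1 ≤ x) :
    ‖(1 - s * Real.log x) * (x : ℂ) ^ (-s - 1)‖ ≤ (1 + ‖s‖ * Real.log x) * x ^ (-s.re - 1) := by
  have hlog : 0 ≤ Real.log x := Real.log_nonneg hx
  rw [norm_mul, Complex.norm_cpow_eq_rpow_re_of_pos (by linarith), Complex.sub_re,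
    Complex.neg_re, Complex.one_re]
  gcongr
  calc ‖1 - s * Real.log x‖ ≤ ‖(1 : ℂ)‖ + ‖s * Real.log x‖ := norm_sub_le _ _
    _ = 1 + ‖s‖ * Real.log x := by
      rw [norm_one, norm_mul, Complex.norm_real, Real.norm_of_nonneg hlog]

theorem tendsto_logMulCpow_natCast {s : ℂ} (hs : 0 < s.re) :
    Tendsto (fun n : ℕ => logMulCpow s n) atTop (𝓝 0) := by
  have hdecay : Tendsto (fun x : ℝ => Real.log x / x ^ s.re) atTop (𝓝 0) :=
    (isLittleO_log_rpow_atTop hs).tendsto_div_nhds_zero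
  refine squeeze_zero_norm' ?_ (hdecay.comp tendsto_natCast_atTop_atTop)
  filter_upwards [eventually_ge_atTop 1] with n hn
  have hn : (1 : ℝ) ≤ n := by exact_mod_cast hn
  rw [logMulCpow, norm_mul, Complex.norm_real, Real.norm_of_nonneg (Real.log_nonneg hn),
    Complex.norm_cpow_eq_rpow_re_of_pos (by linarith), Complex.neg_re, Real.rpow_neg (by linarith),
    Function.comp_apply, div_eq_mul_inv]

/-- An antiderivative of `(1 + c log x) x^(-β-1)` that vanishes at `∞` when `β > 0`. -/
noncomputable def logRpowMajorant (β c x : ℝ) : ℝ :=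
  -(((1 + c * Real.log x) / β + c / β ^ 2) * x ^ (-β))

theorem hasDerivAt_logRpowMajorant {β : ℝ} (c : ℝ) (hβ : β ≠ 0) {x : ℝ} (hx : 0 < x) :
    HasDerivAt (logRpowMajorant β c) ((1 + c * Real.log x) * x ^ (-β - 1)) x := by
  have hpow : HasDerivAt (fun y : ℝ => y ^ (-β)) (-β * x ^ (-β - 1)) x :=
    Real.hasDerivAt_rpow_const (Or.inl hx.ne')
  have hlog := ((((Real.hasDerivAt_log hx.ne').const_mul c).const_add 1).div_const β).add_const
    (c / β ^ 2)
  refine (hlog.mul hpow).neg.congr_deriv ?_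
  rw [sub_eq_add_neg (-β), Real.rpow_add hx, Real.rpow_neg_one]
  field_simp
  ring

theorem logRpowMajorant_nonpos {β c x : ℝ} (hβ : 0 < β) (hc : 0 ≤ c) (hx : 1 ≤ x) :
    logRpowMajorant β c x ≤ 0 := by
  have hlog := Real.log_nonneg hx
  have hpow := Real.rpow_nonneg (zero_le_one.trans hx) (-β)
  rw [logRpowMajorant, neg_nonpos]
  positivity

theorem logRpowMajorant_one (β c : ℝ) : logRpowMajorant β c 1 = -(c / β ^ 2 + 1 / β) := by
  simp only [logRpowMajorant, Real.log_one, mul_zero, add_zero, Real.one_rpow, mul_one]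
  ring

theorem norm_logMulCpow_sub_le {s : ℂ} (hs : s.re ≠ 0) {u v : ℝ} (hu : 1 ≤ u) (huv : u ≤ v) :
    ‖logMulCpow s v - logMulCpow s u‖ ≤
      logRpowMajorant s.re ‖s‖ v - logRpowMajorant s.re ‖s‖ u :=
  norm_sub_le_sub_of_norm_deriv_le huv
    (fun x hx => hasDerivAt_logMulCpow s (by linarith [hx.1]))
    (fun x hx => hasDerivAt_logRpowMajorant ‖s‖ hs (by linarith [hx.1]))
    (fun x hx => norm_deriv_logMulCpow_le s (hu.trans hx.1))

theorem exists_hasSum_logMulCpow_pairs {s : ℂ} (hs : 0 < s.re) :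
    ∃ L, HasSum (fun k : ℕ => logMulCpow s (2 * k : ℕ) - logMulCpow s (2 * k + 1 : ℕ)) L ∧
      ‖L‖ ≤ ‖s‖ / s.re ^ 2 + 1 / s.re := by
  set G := logRpowMajorant s.re ‖s‖
  have hG : MonotoneOn G (Ici 1) := fun u hu v _ huv =>
    sub_nonneg.1 ((norm_nonneg _).trans (norm_logMulCpow_sub_le hs.ne' hu huv))
  refine exists_hasSum_norm_le_of_sum_range_norm_le fun m => ?_
  rcases m with _ | m
  · simp only [range_zero, sum_empty]
    positivity
  have hpair₀ : logMulCpow s (2 * 0 : ℕ) - logMulCpow s (2 * 0 + 1 : ℕ) = 0 := by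
    simp [logMulCpow]
  rw [sum_range_succ', hpair₀, norm_zero, add_zero]
  calc ∑ k ∈ range m, ‖logMulCpow s (2 * (k + 1) : ℕ) - logMulCpow s (2 * (k + 1) + 1 : ℕ)‖
      ≤ ∑ k ∈ range m, (G (2 + 2 * k + 1) - G (2 + 2 * k)) := by
        refine sum_le_sum fun k _ => ?_
        have hk : (1 : ℝ) ≤ 2 + 2 * k := by linarith [k.cast_nonneg (α := ℝ)]
        have hcast₀ : ((2 * (k + 1) : ℕ) : ℝ) = 2 + 2 * k := by push_cast; ring
        have hcast₁ : ((2 * (k + 1) + 1 : ℕ) : ℝ) = 2 + 2 * k + 1 := by push_cast; ring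
        rw [norm_sub_rev, hcast₀, hcast₁]
        exact norm_logMulCpow_sub_le hs.ne' hk (le_add_of_nonneg_right zero_le_one)
    _ ≤ G (2 + 2 * m) - G 2 :=
        sum_range_sub_le_of_monotoneOn (hG.mono (Ici_subset_Ici.2 one_le_two)) m
    _ ≤ 0 - G 1 := by
      have hm : (0 : ℝ) ≤ m := m.cast_nonneg
      gcongr
      · exact logRpowMajorant_nonpos hs (norm_nonneg s) (by linarith)
      · exact hG Set.self_mem_Ici (by norm_num) one_le_two
    _ = ‖s‖ / s.re ^ 2 + 1 / s.re := by rw [show G 1 = _ from logRpowMajorant_one _ _]; ring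

/-- For every complex `s` with `0 < Re s`, the derivative of the Dirichlet eta
function, `η'(s) = -∑_{n=1}^∞ (-1)^{n+1} (ln n) n^{-s}` (as the limit of its
partial sums), satisfies `|η'(s)| ≤ |s|/(Re s)^2 + 1/(Re s)`. -/
theorem eta_deriv_bound (s : ℂ) (hs : 0 < s.re) :
    ∃ L : ℂ,
      Tendsto
        (fun N : ℕ => ∑ n ∈ Finset.Icc 1 N,
          -((-1 : ℂ) ^ (n + 1) * (Real.log n : ℂ) * (n : ℂ) ^ (-s)))
        atTop (𝓝 L) ∧ ‖L‖ ≤ ‖s‖ / s.re ^ 2 + 1 / s.re := by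
  obtain ⟨L, hL, hLle⟩ := exists_hasSum_logMulCpow_pairs hs
  refine ⟨L, ?_, hLle⟩
  have hpartial (N : ℕ) :
      ∑ n ∈ Finset.Icc 1 N, -((-1 : ℂ) ^ (n + 1) * (Real.log n : ℂ) * (n : ℂ) ^ (-s)) =
        ∑ n ∈ range (N + 1), (-1) ^ n * logMulCpow s n := by
    rw [sum_range_eq_add_Ico _ (by positivity), Finset.Ico_add_one_right_eq_Icc]
    simp [logMulCpow, pow_succ, mul_assoc]
  simp_rw [hpartial]
  exact (tendsto_sum_range_neg_one_pow_mul_of_hasSum (tendsto_logMulCpow_natCast hs) hL).comp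
    (tendsto_add_atTop_nat 1)
end

section
/- Let s = β + it with β > 0. There exist constants N₀ and the tail R_N(s) = Σ_{n=N+1}^∞ (-1)^{n-1} n^{-s} satisfies (1/4)(N+1)^{-β} ≤ |R_N(s)| ≤ (3/4)(N+1)^{-β} for all N ≥ N₀. -/
open Filter Topology Finset

/-!
Write `a n = n ^ (-s)`. Summation by parts gives `2 R_N = (-1)^N a (N+1) + T_N`, where `T_N` is the
alternating tail of the first differences `a n - a (n+1)`. Summing by parts once more,
`2 ‖T_N‖ ≤ ‖a (N+1) - a (N+2)‖ + ∑_{n > N} ‖Δ² a n‖`, and by the mean value theorem both terms are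
`O((N+1)^(-β-1))`. So `‖T_N‖ ≤ (N+1)^(-β) / 2 = ‖a (N+1)‖ / 2` for large `N`, which puts `‖R_N‖`
between `1/4` and `3/4` of `(N+1)^(-β)`.
-/

section AlternatingSums

variable {𝕜 : Type*}

def altPartialSum [CommRing 𝕜] (b : ℕ → 𝕜) (N M : ℕ) : 𝕜 :=
  ∑ n ∈ Icc (N + 1) M, (-1) ^ (n + 1) * b n

theorem two_mul_altPartialSum_succ [CommRing 𝕜] (b : ℕ → 𝕜) {N M : ℕ} (h : N ≤ M) :
    2 * altPartialSum b N (M + 1) =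
      (-1) ^ N * b (N + 1) + altPartialSum (fun n => b n - b (n + 1)) N M +
        (-1) ^ M * b (M + 1) := by
  induction M, h using Nat.le_induction with
  | base => simp [altPartialSum, pow_succ]; ring
  | succ M hM ih =>
    rw [altPartialSum, sum_Icc_succ_top (by omega), mul_add, ← altPartialSum, ih, altPartialSum,
      altPartialSum, sum_Icc_succ_top (by omega : N + 1 ≤ M + 1)]
    simp only [pow_succ]
    ring

variable [NormedField 𝕜] {b : ℕ → 𝕜} {L : 𝕜} {N : ℕ}

theorem tendsto_altPartialSum_sub (hb : Tendsto b atTop (𝓝 0))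
    (hL : Tendsto (altPartialSum b N) atTop (𝓝 L)) :
    Tendsto (altPartialSum (fun n => b n - b (n + 1)) N) atTop
      (𝓝 (2 * L - (-1) ^ N * b (N + 1))) := by
  have hlast : Tendsto (fun M => (-1 : 𝕜) ^ M * b (M + 1)) atTop (𝓝 0) := by
    rw [tendsto_zero_iff_norm_tendsto_zero]
    simpa [Function.comp_def] using
      (tendsto_zero_iff_norm_tendsto_zero.1 hb).comp (tendsto_add_atTop_nat 1)
  have h := (((hL.comp (tendsto_add_atTop_nat 1)).const_mul 2).sub_const
    ((-1) ^ N * b (N + 1))).sub hlast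
  rw [sub_zero] at h
  refine h.congr' ?_
  filter_upwards [eventually_ge_atTop N] with M hM
  rw [Function.comp_apply, two_mul_altPartialSum_succ b hM]
  ring

theorem norm_two_mul_sub_le_of_sum_norm_sub_le {B : ℝ} (hb : Tendsto b atTop (𝓝 0))
    (hL : Tendsto (altPartialSum b N) atTop (𝓝 L))
    (hB : ∀ M, ∑ n ∈ Icc (N + 1) M, ‖b n - b (n + 1)‖ ≤ B) :
    ‖2 * L - (-1) ^ N * b (N + 1)‖ ≤ B :=
  le_of_tendsto' (tendsto_altPartialSum_sub hb hL).norm fun M =>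
    (norm_sum_le _ _).trans (by simpa using hB M)

end AlternatingSums

section PowerDifferences

theorem norm_sub_le_of_norm_deriv_le_Icc_add_one {E : Type*} [NormedAddCommGroup E]
    [NormedSpace ℝ E] {f f' : ℝ → E} {x C : ℝ}
    (hf : ∀ y ∈ Set.Icc x (x + 1), HasDerivAt f (f' y) y)
    (hC : ∀ y ∈ Set.Icc x (x + 1), ‖f' y‖ ≤ C) : ‖f x - f (x + 1)‖ ≤ C := by
  have := norm_image_sub_le_of_norm_deriv_le_segment' (fun y hy => (hf y hy).hasDerivWithinAt)
    (fun y hy => hC y (Set.Ico_subset_Icc_self hy)) (x + 1) (Set.right_mem_Icc.2 (by linarith))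
  rw [norm_sub_rev]
  simpa using this

theorem hasDerivAt_ofReal_cpow_neg (w : ℂ) {x : ℝ} (hx : 0 < x) :
    HasDerivAt (fun y : ℝ => (y : ℂ) ^ (-w)) (-w * (x : ℂ) ^ (-w - 1)) x :=
  (Complex.hasStrictDerivAt_cpow_const (c := -w)
    (Or.inl (by simpa using hx))).hasDerivAt.comp_ofReal

variable (w : ℂ) {x : ℝ}

theorem norm_ofReal_cpow_neg_sub_le (hw : -1 ≤ w.re) (hx : 0 < x) :
    ‖(x : ℂ) ^ (-w) - ((x + 1 : ℝ) : ℂ) ^ (-w)‖ ≤ ‖w‖ * x ^ (-w.re - 1) := by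
  refine norm_sub_le_of_norm_deriv_le_Icc_add_one (f := fun y : ℝ => (y : ℂ) ^ (-w))
    (fun y hy => hasDerivAt_ofReal_cpow_neg w (hx.trans_le hy.1)) fun y hy => ?_
  rw [norm_mul, norm_neg, Complex.norm_cpow_eq_rpow_re_of_pos (hx.trans_le hy.1)]
  simp only [Complex.sub_re, Complex.neg_re, Complex.one_re]
  exact mul_le_mul_of_nonneg_left (Real.rpow_le_rpow_of_nonpos hx hy.1 (by linarith))
    (norm_nonneg w)

theorem norm_ofReal_cpow_neg_sub_sub_le (hw : -2 ≤ w.re) (hx : 0 < x) :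
    ‖((x : ℂ) ^ (-w) - ((x + 1 : ℝ) : ℂ) ^ (-w)) -
        (((x + 1 : ℝ) : ℂ) ^ (-w) - ((x + 1 + 1 : ℝ) : ℂ) ^ (-w))‖ ≤
      ‖w‖ * ‖w + 1‖ * x ^ (-w.re - 2) := by
  refine norm_sub_le_of_norm_deriv_le_Icc_add_one
    (f := fun y : ℝ => (y : ℂ) ^ (-w) - ((y + 1 : ℝ) : ℂ) ^ (-w))
    (f' := fun y => -w * ((y : ℂ) ^ (-(w + 1)) - ((y + 1 : ℝ) : ℂ) ^ (-(w + 1))))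
    (fun y hy => ?_) fun y hy => ?_
  · have hy : 0 < y := hx.trans_le hy.1
    refine ((hasDerivAt_ofReal_cpow_neg w hy).sub
      ((hasDerivAt_ofReal_cpow_neg w (by linarith : 0 < y + 1)).comp_add_const y 1)).congr_deriv ?_
    rw [neg_add', mul_sub]
  · have hy' : 0 < y := hx.trans_le hy.1
    have h := norm_ofReal_cpow_neg_sub_le (w + 1) (by simp; linarith) hy'
    have hre : -(w + 1).re - 1 = -w.re - 2 := by simp; ring
    rw [hre] at h
    rw [norm_mul, norm_neg, mul_assoc]
    refine mul_le_mul_of_nonneg_left (h.trans ?_) (norm_nonneg w)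
    exact mul_le_mul_of_nonneg_left (Real.rpow_le_rpow_of_nonpos hx hy.1 (by linarith))
      (norm_nonneg _)

theorem norm_natCast_cpow_neg_sub_le (hw : -1 ≤ w.re) {n : ℕ} (hn : 0 < n) :
    ‖(n : ℂ) ^ (-w) - ((n + 1 : ℕ) : ℂ) ^ (-w)‖ ≤ ‖w‖ * (n : ℝ) ^ (-w.re - 1) := by
  have h := norm_ofReal_cpow_neg_sub_le w hw (Nat.cast_pos.2 hn : (0 : ℝ) < n)
  push_cast at h ⊢
  exact h

theorem norm_natCast_cpow_neg_sub_sub_le (hw : -2 ≤ w.re) {n : ℕ} (hn : 0 < n) :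
    ‖((n : ℂ) ^ (-w) - ((n + 1 : ℕ) : ℂ) ^ (-w)) -
        (((n + 1 : ℕ) : ℂ) ^ (-w) - ((n + 1 + 1 : ℕ) : ℂ) ^ (-w))‖ ≤
      ‖w‖ * ‖w + 1‖ * (n : ℝ) ^ (-w.re - 2) := by
  have h := norm_ofReal_cpow_neg_sub_sub_le w hw (Nat.cast_pos.2 hn : (0 : ℝ) < n)
  push_cast at h ⊢
  exact h

theorem tendsto_natCast_cpow_neg_atTop {s : ℂ} (hs : 0 < s.re) :
    Tendsto (fun n : ℕ => (n : ℂ) ^ (-s)) atTop (𝓝 0) := by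
  rw [tendsto_zero_iff_norm_tendsto_zero]
  simp only [Complex.norm_natCast_cpow_of_re_ne_zero _ (by simpa using hs.ne' : (-s).re ≠ 0),
    Complex.neg_re]
  exact (tendsto_rpow_neg_atTop hs).comp tendsto_natCast_atTop_atTop

end PowerDifferences

theorem sum_Icc_rpow_neg_sub_two_le {β : ℝ} (hβ : 0 ≤ β) (N M : ℕ) :
    ∑ n ∈ Icc (N + 1) M, (n : ℝ) ^ (-β - 2) ≤ 2 * ((N : ℝ) + 1) ^ (-β) / ((N : ℝ) + 1) := by
  have hIcc : Icc (N + 1) M = Ioo N (M + 1) := by ext; simp only [mem_Icc, mem_Ioo]; omega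
  calc ∑ n ∈ Icc (N + 1) M, (n : ℝ) ^ (-β - 2)
      ≤ ∑ n ∈ Icc (N + 1) M, ((N : ℝ) + 1) ^ (-β) * ((n : ℝ) ^ 2)⁻¹ := by
        refine sum_le_sum fun n hn => ?_
        have hn' : (N : ℝ) + 1 ≤ n := by exact_mod_cast (mem_Icc.1 hn).1
        rw [Real.rpow_sub ((by positivity : (0 : ℝ) < N + 1).trans_le hn'), Real.rpow_two,
          div_eq_mul_inv]
        exact mul_le_mul_of_nonneg_right
          (Real.rpow_le_rpow_of_nonpos (by positivity) hn' (by linarith)) (by positivity)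
    _ ≤ ((N : ℝ) + 1) ^ (-β) * (2 / ((N : ℝ) + 1)) := by
        rw [← mul_sum, hIcc]
        gcongr
        exact sum_Ioo_inv_sq_le N (M + 1)
    _ = 2 * ((N : ℝ) + 1) ^ (-β) / ((N : ℝ) + 1) := by ring

theorem norm_bounds_of_two_mul_norm_two_mul_sub_le {z u : ℂ} (h : 2 * ‖2 * z - u‖ ≤ ‖u‖) :
    ‖u‖ / 4 ≤ ‖z‖ ∧ ‖z‖ ≤ 3 / 4 * ‖u‖ := by
  have h' := abs_le.1 (abs_norm_sub_norm_le (2 * z) u)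
  rw [norm_mul, Complex.norm_two] at h'
  constructor <;> linarith [h'.1, h'.2]

theorem two_mul_norm_two_mul_sub_leading_term_le {s : ℂ} (hs : 0 < s.re) {N : ℕ} {L : ℂ}
    (hL : Tendsto (altPartialSum (fun n : ℕ => (n : ℂ) ^ (-s)) N) atTop (𝓝 L)) :
    2 * ‖2 * L - (-1) ^ N * ((N + 1 : ℕ) : ℂ) ^ (-s)‖ ≤
      (‖s‖ + 2 * (‖s‖ * ‖s + 1‖)) * ((N : ℝ) + 1) ^ (-s.re) / ((N : ℝ) + 1) := by
  set X := ((N : ℝ) + 1) ^ (-s.re)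
  let a : ℕ → ℂ := fun n => (n : ℂ) ^ (-s)
  have ha0 : Tendsto a atTop (𝓝 0) := tendsto_natCast_cpow_neg_atTop hs
  have hc0 : Tendsto (fun n => a n - a (n + 1)) atTop (𝓝 0) := by
    simpa using ha0.sub (ha0.comp (tendsto_add_atTop_nat 1))
  have hsecond : ‖2 * (2 * L - (-1) ^ N * a (N + 1)) - (-1) ^ N * (a (N + 1) - a (N + 1 + 1))‖ ≤
      ‖s‖ * ‖s + 1‖ * (2 * X / ((N : ℝ) + 1)) :=
    norm_two_mul_sub_le_of_sum_norm_sub_le hc0 (tendsto_altPartialSum_sub ha0 hL) fun M =>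
      (sum_le_sum fun n hn => norm_natCast_cpow_neg_sub_sub_le s (by linarith)
        (by have := (mem_Icc.1 hn).1; omega)).trans <| by
      rw [← mul_sum]
      exact mul_le_mul_of_nonneg_left (sum_Icc_rpow_neg_sub_two_le hs.le N M) (by positivity)
  have hfirst : ‖a (N + 1) - a (N + 1 + 1)‖ ≤ ‖s‖ * (X / ((N : ℝ) + 1)) := by
    have h := norm_natCast_cpow_neg_sub_le s (by linarith) (by omega : 0 < N + 1)
    rw [Real.rpow_sub_one (by positivity), Nat.cast_succ (R := ℝ)] at h
    exact h
  have h := norm_le_insert' (2 * (2 * L - (-1) ^ N * a (N + 1)))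
    ((-1) ^ N * (a (N + 1) - a (N + 1 + 1)))
  rw [norm_mul, norm_mul, Complex.norm_two, norm_pow, norm_neg, norm_one, one_pow,
    one_mul] at h
  calc 2 * ‖2 * L - (-1) ^ N * a (N + 1)‖
      ≤ ‖s‖ * (X / ((N : ℝ) + 1)) + ‖s‖ * ‖s + 1‖ * (2 * X / ((N : ℝ) + 1)) := by linarith
    _ = (‖s‖ + 2 * (‖s‖ * ‖s + 1‖)) * X / ((N : ℝ) + 1) := by ring

/-- For `s` with `Re s = β > 0`, the tails `R_N(s) = ∑_{n=N+1}^∞ (-1)^{n-1} n^{-s}`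
of the alternating Dirichlet series satisfy
`(1/4)(N+1)^{-β} ≤ |R_N(s)| ≤ (3/4)(N+1)^{-β}` for all `N ≥ N₀`, for some `N₀`. -/
theorem tail_bounds (s : ℂ) (hs : 0 < s.re) (R : ℕ → ℂ)
    (hR : ∀ N : ℕ,
      Tendsto (fun M : ℕ => ∑ n ∈ Finset.Icc (N + 1) M, (-1 : ℂ) ^ (n + 1) * (n : ℂ) ^ (-s))
        atTop (𝓝 (R N))) :
    ∃ N₀ : ℕ, ∀ N ≥ N₀,
      (1 / 4 : ℝ) * ((N : ℝ) + 1) ^ (-s.re) ≤ ‖R N‖ ∧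
        ‖R N‖ ≤ (3 / 4 : ℝ) * ((N : ℝ) + 1) ^ (-s.re) := by
  set C := ‖s‖ + 2 * (‖s‖ * ‖s + 1‖)
  refine ⟨⌈C⌉₊, fun N hN => ?_⟩
  set X := ((N : ℝ) + 1) ^ (-s.re)
  have hCN : C ≤ (N : ℝ) + 1 := by linarith [Nat.ceil_le.1 hN]
  have hlead : ‖(-1) ^ N * ((N + 1 : ℕ) : ℂ) ^ (-s)‖ = X := by
    rw [norm_mul, norm_pow, norm_neg, norm_one, one_pow, one_mul,
      Complex.norm_natCast_cpow_of_pos (by omega), Complex.neg_re, Nat.cast_succ]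
  have hsmall : C * X / ((N : ℝ) + 1) ≤ X := by
    rw [div_le_iff₀ (by positivity)]
    nlinarith [(by positivity : 0 ≤ X)]
  have h := norm_bounds_of_two_mul_norm_two_mul_sub_le <|
    (two_mul_norm_two_mul_sub_leading_term_le hs (hR N)).trans (hsmall.trans_eq hlead.symm)
  rw [hlead] at h
  constructor <;> linarith [h.1, h.2]
end

section
/- Let s = β + it with β > 0 be a zero of the Riemann zeta function (so the alternating series sum is 0). Then the partial sums S_N(s) = Σ_{n=1}^{N} (-1)^{n-1} n^{-s} satisfy lim_{N→∞} -(1/log₂ N)·ln|S_N(s)| = β·ln 2. -/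
/-!
Write `S_N` for the partial sums and `a_n = n^{-s}`. Adding the correction
`(-1)^N (3/4 a_{N+1} - 1/4 a_{N+2})` to `S_N` gives a sequence `F_N` whose increments are
`(-1)^N/4` times second differences of `n^{-s}`, hence `O(N^{-β-2})`. So `F_N` converges to a
function `η(s)` with `η(s) - F_N = o(N^{-β})`, and by the M-test `η` is holomorphic on `Re s > 0`.
On `Re s > 1` it is the L-function of the sign function mod 2, which equals `(1 - 2^{1-s}) ζ(s)`;
by the identity theorem `η(s) = 0` at a zero of `ζ`. Then `S_N = -(η(s) - F_N) - correction`, where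
the correction has norm between `(N+1)^{-β}/2` and `(N+1)^{-β}`; thus `|S_N| ≍ N^{-β}`, which
gives the limit.
-/

open Filter Topology Set

theorem norm_sub_two_nsmul_add_le {E : Type*} [NormedAddCommGroup E] [NormedSpace ℝ E]
    {f f' f'' : ℝ → E} {x M : ℝ}
    (hf : ∀ t ∈ Icc x (x + 2), HasDerivAt f (f' t) t)
    (hf' : ∀ t ∈ Icc x (x + 2), HasDerivAt f' (f'' t) t)
    (hM : ∀ t ∈ Icc x (x + 2), ‖f'' t‖ ≤ M) :
    ‖f x - 2 • f (x + 1) + f (x + 2)‖ ≤ M := by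
  have hderiv_diff : ∀ t ∈ Icc x (x + 1), ‖f' t - f' (t + 1)‖ ≤ M := by
    intro t ⟨ht₀, ht₁⟩
    have hsub : Icc t (t + 1) ⊆ Icc x (x + 2) := Icc_subset_Icc ht₀ (by linarith)
    have := norm_image_sub_le_of_norm_deriv_le_segment'
      (fun u hu => (hf' u (hsub hu)).hasDerivWithinAt)
      (fun u hu => hM u (hsub (Ico_subset_Icc_self hu))) (t + 1) ⟨by linarith, le_rfl⟩
    rwa [norm_sub_rev, add_sub_cancel_left, mul_one] at this
  have hsub : ∀ t ∈ Icc x (x + 1), t ∈ Icc x (x + 2) ∧ t + 1 ∈ Icc x (x + 2) :=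
    fun t ⟨h₀, h₁⟩ => ⟨⟨h₀, by linarith⟩, ⟨by linarith, by linarith⟩⟩
  have := norm_image_sub_le_of_norm_deriv_le_segment' (f := fun t => f t - f (t + 1))
    (fun t ht => ((hf t (hsub t ht).1).sub
      ((hf (t + 1) (hsub t ht).2).comp_add_const t 1)).hasDerivWithinAt)
    (fun t ht => hderiv_diff t (Ico_subset_Icc_self ht)) (x + 1) ⟨by linarith, le_rfl⟩
  rw [add_sub_cancel_left, mul_one, ← norm_neg, add_assoc x 1 1, one_add_one_eq_two] at this
  refine (congrArg norm ?_).trans_le this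
  rw [two_nsmul]
  abel

theorem hasDerivAt_ofReal_cpow_of_pos {x : ℝ} (hx : 0 < x) (r : ℂ) :
    HasDerivAt (fun t : ℝ => (t : ℂ) ^ r) (r * (x : ℂ) ^ (r - 1)) x := by
  simpa [mul_comm] using
    ((hasDerivAt_id (x : ℂ)).cpow_const (c := r) (Complex.ofReal_mem_slitPlane.2 hx)).comp_ofReal

theorem norm_ofReal_cpow_second_diff_le {s : ℂ} (hs : -2 ≤ s.re) {x : ℝ} (hx : 0 < x) :
    ‖(x : ℂ) ^ (-s) - 2 * ((x + 1 : ℝ) : ℂ) ^ (-s) + ((x + 2 : ℝ) : ℂ) ^ (-s)‖ ≤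
      ‖s‖ * ‖s + 1‖ * x ^ (-s.re - 2) := by
  have hpos : ∀ t ∈ Icc x (x + 2), 0 < t := fun t ht => hx.trans_le ht.1
  have := norm_sub_two_nsmul_add_le (x := x) (M := ‖s‖ * ‖s + 1‖ * x ^ (-s.re - 2))
    (f := fun t : ℝ => (t : ℂ) ^ (-s)) (f' := fun t : ℝ => -s * (t : ℂ) ^ (-s - 1))
    (f'' := fun t : ℝ => -s * ((-s - 1) * (t : ℂ) ^ (-s - 1 - 1)))
    (fun t ht => hasDerivAt_ofReal_cpow_of_pos (hpos t ht) _)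
    (fun t ht => (hasDerivAt_ofReal_cpow_of_pos (hpos t ht) _).const_mul _)
    (fun t ht => by
      rw [norm_mul, norm_mul, Complex.norm_cpow_eq_rpow_re_of_pos (hpos t ht), norm_neg,
        ← neg_add', norm_neg, mul_assoc]
      gcongr
      have hre : (-(s + 1) - 1).re = -s.re - 2 := by simp; ring
      rw [hre]
      exact Real.rpow_le_rpow_of_nonpos hx ht.1 (by linarith))
  simpa [two_nsmul, two_mul] using this

def altSum (a : ℕ → ℂ) (N : ℕ) : ℂ := ∑ n ∈ Finset.Icc 1 N, (-1 : ℂ) ^ (n + 1) * a n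

/-- The weights `3/4, -1/4` are the ones for which the increments of `smoothedAltSum` are
multiples of second differences of `a` (`smoothedAltSum_succ_sub`). -/
noncomputable def altCorrection (a : ℕ → ℂ) (N : ℕ) : ℂ :=
  (-1) ^ N * (3 / 4 * a (N + 1) - 1 / 4 * a (N + 2))

noncomputable def smoothedAltSum (a : ℕ → ℂ) (N : ℕ) : ℂ := altSum a N + altCorrection a N

def secondDiff (a : ℕ → ℂ) (k : ℕ) : ℂ := a k - 2 * a (k + 1) + a (k + 2)

theorem altSum_succ (a : ℕ → ℂ) (N : ℕ) :
    altSum a (N + 1) = altSum a N + (-1) ^ N * a (N + 1) := by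
  rw [altSum, altSum, Finset.sum_Icc_succ_top (by omega)]
  ring

theorem smoothedAltSum_succ_sub (a : ℕ → ℂ) (N : ℕ) :
    smoothedAltSum a (N + 1) - smoothedAltSum a N = (-1) ^ N / 4 * secondDiff a (N + 1) := by
  simp only [smoothedAltSum, altSum_succ, altCorrection, secondDiff, pow_succ]
  ring

theorem norm_altCorrection_bounds (a : ℕ → ℂ) (N : ℕ) (ha : ‖a (N + 2)‖ ≤ ‖a (N + 1)‖) :
    ‖a (N + 1)‖ / 2 ≤ ‖altCorrection a N‖ ∧ ‖altCorrection a N‖ ≤ ‖a (N + 1)‖ := by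
  have h₃ : ‖3 / 4 * a (N + 1)‖ = 3 / 4 * ‖a (N + 1)‖ := by simp
  have h₁ : ‖1 / 4 * a (N + 2)‖ = 1 / 4 * ‖a (N + 2)‖ := by simp
  rw [altCorrection, norm_mul, norm_pow, norm_neg, norm_one, one_pow, one_mul]
  constructor
  · linarith [norm_sub_norm_le (3 / 4 * a (N + 1)) (1 / 4 * a (N + 2))]
  · linarith [norm_sub_le (3 / 4 * a (N + 1)) (1 / 4 * a (N + 2))]

noncomputable def etaTerm (s : ℂ) (k : ℕ) : ℂ :=
  (-1) ^ k / 4 * secondDiff (fun n : ℕ => (n : ℂ) ^ (-s)) (k + 1)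

/-- The limit of `smoothedAltSum`, written as a telescoping series so that its holomorphy follows
from the M-test. -/
noncomputable def dirichletEta (s : ℂ) : ℂ :=
  smoothedAltSum (fun n : ℕ => (n : ℂ) ^ (-s)) 0 + ∑' k, etaTerm s k

theorem norm_etaTerm_le {s : ℂ} (hs : -2 ≤ s.re) (k : ℕ) :
    ‖etaTerm s k‖ ≤ ‖s‖ * ‖s + 1‖ / 4 * (((k : ℝ) + 1) ^ (-s.re) * (((k : ℝ) + 1) ^ 2)⁻¹) := by
  have hk : (0 : ℝ) < k + 1 := by positivity
  have h := norm_ofReal_cpow_second_diff_le hs hk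
  rw [Real.rpow_sub hk, Real.rpow_two, div_eq_mul_inv] at h
  have hcast : secondDiff (fun n : ℕ => (n : ℂ) ^ (-s)) (k + 1) = ((k + 1 : ℝ) : ℂ) ^ (-s) -
      2 * ((k + 1 + 1 : ℝ) : ℂ) ^ (-s) + ((k + 1 + 2 : ℝ) : ℂ) ^ (-s) := by
    simp only [secondDiff]
    push_cast
    ring_nf
  calc ‖etaTerm s k‖ = ‖secondDiff (fun n : ℕ => (n : ℂ) ^ (-s)) (k + 1)‖ / 4 := by
        simp [etaTerm, div_eq_inv_mul]
    _ ≤ _ := by rw [hcast]; linarith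

theorem summable_inv_add_one_sq : Summable fun k : ℕ => (((k : ℝ) + 1) ^ 2)⁻¹ := by
  exact_mod_cast (summable_nat_add_iff 1).2 (Real.summable_nat_pow_inv.2 one_lt_two)

theorem norm_etaTerm_le_of_norm_le {s : ℂ} (hs : 0 ≤ s.re) {R : ℝ} (hR : ‖s‖ ≤ R) (k : ℕ) :
    ‖etaTerm s k‖ ≤ R * (R + 1) / 4 * (((k : ℝ) + 1) ^ 2)⁻¹ := by
  have hpow : ((k : ℝ) + 1) ^ (-s.re) ≤ 1 :=
    Real.rpow_le_one_of_one_le_of_nonpos (by linarith [k.cast_nonneg (α := ℝ)]) (by linarith)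
  have hs1 : ‖s + 1‖ ≤ R + 1 := (norm_add_le _ _).trans (by rw [norm_one]; linarith)
  have hR₀ : 0 ≤ R := (norm_nonneg s).trans hR
  calc ‖etaTerm s k‖ ≤ ‖s‖ * ‖s + 1‖ / 4 * (((k : ℝ) + 1) ^ (-s.re) * (((k : ℝ) + 1) ^ 2)⁻¹) :=
        norm_etaTerm_le (by linarith) k
    _ ≤ R * (R + 1) / 4 * (1 * (((k : ℝ) + 1) ^ 2)⁻¹) := by gcongr
    _ = R * (R + 1) / 4 * (((k : ℝ) + 1) ^ 2)⁻¹ := by rw [one_mul]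

theorem summable_etaTerm {s : ℂ} (hs : 0 ≤ s.re) : Summable (etaTerm s) :=
  .of_norm_bounded (summable_inv_add_one_sq.mul_left _) (norm_etaTerm_le_of_norm_le hs le_rfl)

theorem smoothedAltSum_eq_add_sum_etaTerm (s : ℂ) (N : ℕ) :
    smoothedAltSum (fun n : ℕ => (n : ℂ) ^ (-s)) N =
      smoothedAltSum (fun n : ℕ => (n : ℂ) ^ (-s)) 0 + ∑ k ∈ Finset.range N, etaTerm s k := by
  simp only [etaTerm, ← smoothedAltSum_succ_sub, Finset.sum_range_sub]
  ring

theorem tendsto_smoothedAltSum {s : ℂ} (hs : 0 ≤ s.re) :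
    Tendsto (smoothedAltSum fun n : ℕ => (n : ℂ) ^ (-s)) atTop (𝓝 (dirichletEta s)) := by
  rw [dirichletEta]
  exact ((summable_etaTerm hs).hasSum.tendsto_sum_nat.const_add _).congr fun N =>
    (smoothedAltSum_eq_add_sum_etaTerm s N).symm

theorem norm_dirichletEta_sub_smoothedAltSum_le {s : ℂ} (hs : 0 ≤ s.re) (N : ℕ) :
    ‖dirichletEta s - smoothedAltSum (fun n : ℕ => (n : ℂ) ^ (-s)) N‖ ≤
      ((N : ℝ) + 1) ^ (-s.re) * (‖s‖ * ‖s + 1‖ / 4 * ∑' k, ((((k + N : ℕ) : ℝ) + 1) ^ 2)⁻¹) := by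
  have htail : dirichletEta s - smoothedAltSum (fun n : ℕ => (n : ℂ) ^ (-s)) N =
      ∑' k, etaTerm s (k + N) := by
    rw [dirichletEta, smoothedAltSum_eq_add_sum_etaTerm s N,
      ← (summable_etaTerm hs).sum_add_tsum_nat_add N]
    ring
  rw [htail, ← tsum_mul_left, ← tsum_mul_left]
  refine tsum_of_norm_bounded (((summable_nat_add_iff N).2 summable_inv_add_one_sq).mul_left _
    |>.mul_left _).hasSum fun k => (norm_etaTerm_le (by linarith) (k + N)).trans ?_
  have hkN : ((N : ℝ) + 1) ≤ ((k + N : ℕ) : ℝ) + 1 := by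
    push_cast
    linarith [k.cast_nonneg (α := ℝ)]
  have := Real.rpow_le_rpow_of_nonpos (by positivity) hkN (by linarith : -s.re ≤ 0)
  calc _ ≤ ‖s‖ * ‖s + 1‖ / 4 * (((N : ℝ) + 1) ^ (-s.re) * ((((k + N : ℕ) : ℝ) + 1) ^ 2)⁻¹) := by
        gcongr
    _ = _ := by ring

theorem differentiable_natCast_cpow_neg {n : ℕ} (hn : n ≠ 0) :
    Differentiable ℂ fun z : ℂ => (n : ℂ) ^ (-z) :=
  differentiable_neg.const_cpow (Or.inl (by exact_mod_cast hn))

theorem differentiable_smoothedAltSum (N : ℕ) :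
    Differentiable ℂ fun z : ℂ => smoothedAltSum (fun n : ℕ => (n : ℂ) ^ (-z)) N := by
  unfold smoothedAltSum altSum altCorrection
  apply Differentiable.add
  · exact .fun_sum fun n hn =>
      (differentiable_natCast_cpow_neg (by simp at hn; omega)).const_mul _
  · exact .const_mul (.sub ((differentiable_natCast_cpow_neg N.succ_ne_zero).const_mul _)
      ((differentiable_natCast_cpow_neg (by omega)).const_mul _)) _

theorem differentiableOn_dirichletEta : DifferentiableOn ℂ dirichletEta {z | 0 < z.re} := by
  intro z hz
  set U := {w : ℂ | 0 < w.re ∧ ‖w‖ < ‖z‖ + 1}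
  have hU : IsOpen U := (isOpen_lt continuous_const Complex.continuous_re).inter
    (isOpen_lt continuous_norm continuous_const)
  have hterm (k : ℕ) : Differentiable ℂ fun w : ℂ => etaTerm w k := by
    simp only [etaTerm, ← smoothedAltSum_succ_sub]
    exact (differentiable_smoothedAltSum (k + 1)).fun_sub (differentiable_smoothedAltSum k)
  have htsum : DifferentiableOn ℂ (fun w => ∑' k, etaTerm w k) U :=
    Complex.differentiableOn_tsum_of_summable_norm (summable_inv_add_one_sq.mul_left _)
      (fun k => (hterm k).differentiableOn) hU
      fun k w hw => norm_etaTerm_le_of_norm_le hw.1.le hw.2.le k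
  exact (((differentiable_smoothedAltSum 0).differentiableOn.add htsum).differentiableAt
    (hU.mem_nhds ⟨hz, lt_add_one _⟩)).differentiableWithinAt

theorem norm_altCorrection_cpow_bounds {s : ℂ} (hs : 0 ≤ s.re) (N : ℕ) :
    ((N : ℝ) + 1) ^ (-s.re) / 2 ≤ ‖altCorrection (fun n : ℕ => (n : ℂ) ^ (-s)) N‖ ∧
      ‖altCorrection (fun n : ℕ => (n : ℂ) ^ (-s)) N‖ ≤ ((N : ℝ) + 1) ^ (-s.re) := by
  have hnorm (n : ℕ) : ‖((n + 1 : ℕ) : ℂ) ^ (-s)‖ = ((n : ℝ) + 1) ^ (-s.re) := by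
    rw [Complex.norm_natCast_cpow_of_pos n.succ_pos, Complex.neg_re]
    push_cast
    rfl
  have hmono : ‖((N + 2 : ℕ) : ℂ) ^ (-s)‖ ≤ ‖((N + 1 : ℕ) : ℂ) ^ (-s)‖ := by
    rw [hnorm, hnorm]
    exact Real.rpow_le_rpow_of_nonpos (by positivity) (by push_cast; linarith) (by linarith)
  simpa only [hnorm] using norm_altCorrection_bounds (fun n : ℕ => (n : ℂ) ^ (-s)) N hmono

theorem tendsto_altSum_dirichletEta {s : ℂ} (hs : 0 < s.re) :
    Tendsto (altSum fun n : ℕ => (n : ℂ) ^ (-s)) atTop (𝓝 (dirichletEta s)) := by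
  have hcorr : Tendsto (altCorrection fun n : ℕ => (n : ℂ) ^ (-s)) atTop (𝓝 0) :=
    squeeze_zero_norm (fun N => (norm_altCorrection_cpow_bounds hs.le N).2)
      ((tendsto_rpow_neg_atTop hs).comp
        (tendsto_atTop_add_const_right _ 1 tendsto_natCast_atTop_atTop))
  simpa [smoothedAltSum] using (tendsto_smoothedAltSum hs.le).sub hcorr

noncomputable def altSign : ZMod 2 → ℂ := fun j => -(-1) ^ j.val

theorem altSign_natCast (n : ℕ) : altSign n = (-1) ^ (n + 1) := by
  rw [altSign, ZMod.val_natCast, ← neg_one_pow_eq_pow_mod_two, pow_succ]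
  ring

theorem sum_altSign : ∑ j, altSign j = 0 := by
  rw [show ∑ j, altSign j = altSign 0 + altSign 1 from Fin.sum_univ_two _]
  simp [altSign, show (1 : ZMod 2).val = 1 from rfl]

theorem LFunction_altSign {z : ℂ} (hz : z ≠ 1) :
    ZMod.LFunction altSign z = (1 - 2 ^ (1 - z)) * riemannZeta z := by
  have hLFunction (Φ : ZMod 2 → ℂ) : ZMod.LFunction Φ z = 2 ^ (-z) *
      (Φ 0 * riemannZeta z + Φ 1 * HurwitzZeta.hurwitzZeta (ZMod.toAddCircle (1 : ZMod 2)) z) := by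
    rw [ZMod.LFunction, ← HurwitzZeta.hurwitzZeta_zero, ← map_zero (ZMod.toAddCircle (N := 2))]
    exact congrArg _ (Fin.sum_univ_two _)
  have htriv := DirichletCharacter.LFunctionTrivChar_eq_mul_riemannZeta (N := 2) hz
  rw [DirichletCharacter.LFunctionTrivChar, DirichletCharacter.LFunction, hLFunction,
    Nat.prime_two.primeFactors, Finset.prod_singleton, MulChar.map_nonunit _ not_isUnit_zero,
    MulChar.map_one] at htriv
  rw [hLFunction, show (1 : ℂ) - z = 1 + -z by ring, Complex.cpow_add _ _ two_ne_zero,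
    Complex.cpow_one]
  simp only [altSign, ZMod.val_zero, pow_zero, show (1 : ZMod 2).val = 1 from rfl, pow_one,
    neg_neg]
  linear_combination htriv

theorem altSum_eq_sum_range_LSeries_term (z : ℂ) (N : ℕ) :
    altSum (fun n : ℕ => (n : ℂ) ^ (-z)) N =
      ∑ n ∈ Finset.range (N + 1), LSeries.term (fun n => altSign n) z n := by
  rw [Finset.range_eq_Ico, Finset.sum_eq_sum_Ico_succ_bot (Nat.succ_pos N), LSeries.term_zero,
    zero_add, altSum]
  refine Finset.sum_congr rfl fun n hn => ?_
  rw [LSeries.term_of_ne_zero (by simp at hn; omega), altSign_natCast, Complex.cpow_neg,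
    div_eq_mul_inv]

theorem tendsto_altSum_LFunction {z : ℂ} (hz : 1 < z.re) :
    Tendsto (altSum fun n : ℕ => (n : ℂ) ^ (-z)) atTop (𝓝 (ZMod.LFunction altSign z)) := by
  rw [ZMod.LFunction_eq_LSeries altSign hz]
  exact ((ZMod.LSeriesSummable_of_one_lt_re altSign hz).hasSum.tendsto_sum_nat.comp
    (tendsto_add_atTop_nat 1)).congr fun N => (altSum_eq_sum_range_LSeries_term z N).symm

theorem dirichletEta_eq_LFunction {z : ℂ} (hz : 0 < z.re) :
    dirichletEta z = ZMod.LFunction altSign z := by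
  have hU : IsOpen {w : ℂ | 0 < w.re} := isOpen_lt continuous_const Complex.continuous_re
  refine (differentiableOn_dirichletEta.analyticOnNhd hU).eqOn_of_preconnected_of_eventuallyEq
    ((ZMod.differentiable_LFunction_of_sum_zero sum_altSign).differentiableOn.analyticOnNhd hU)
    (convex_halfSpace_re_gt 0).isPreconnected (by norm_num : (0 : ℝ) < (2 : ℂ).re) ?_ hz
  filter_upwards [(isOpen_lt continuous_const Complex.continuous_re).mem_nhds
    (by norm_num : (1 : ℝ) < (2 : ℂ).re)] with w hw
  exact tendsto_nhds_unique (tendsto_altSum_dirichletEta (by linarith [show (1:ℝ) < w.re from hw]))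
    (tendsto_altSum_LFunction hw)

theorem dirichletEta_eq_mul_riemannZeta {z : ℂ} (hz : 0 < z.re) (hz₁ : z ≠ 1) :
    dirichletEta z = (1 - 2 ^ (1 - z)) * riemannZeta z := by
  rw [dirichletEta_eq_LFunction hz, LFunction_altSign hz₁]

theorem dirichletEta_sub_smoothedAltSum_isLittleO {s : ℂ} (hs : 0 ≤ s.re) :
    (fun N => dirichletEta s - smoothedAltSum (fun n : ℕ => (n : ℂ) ^ (-s)) N) =o[atTop]
      fun N : ℕ => ((N : ℝ) + 1) ^ (-s.re) := by
  have hε : Tendsto (fun N : ℕ => ‖s‖ * ‖s + 1‖ / 4 * ∑' k, ((((k + N : ℕ) : ℝ) + 1) ^ 2)⁻¹)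
      atTop (𝓝 0) := by
    simpa using
      (tendsto_sum_nat_add fun k : ℕ => (((k : ℝ) + 1) ^ 2)⁻¹).const_mul (‖s‖ * ‖s + 1‖ / 4)
  refine Asymptotics.isLittleO_iff.2 fun c hc => ?_
  filter_upwards [hε.eventually (ge_mem_nhds hc)] with N hN
  rw [Real.norm_of_nonneg (by positivity), mul_comm c]
  exact (norm_dirichletEta_sub_smoothedAltSum_le hs N).trans (by gcongr)

theorem norm_altSum_bounds_of_dirichletEta_eq_zero {s : ℂ} (hs : 0 < s.re)
    (hη : dirichletEta s = 0) :
    ∀ᶠ N : ℕ in atTop, 1 / 4 * ((N : ℝ) + 1) ^ (-s.re) ≤ ‖altSum (fun n : ℕ => (n : ℂ) ^ (-s)) N‖ ∧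
      ‖altSum (fun n : ℕ => (n : ℂ) ^ (-s)) N‖ ≤ 5 / 4 * ((N : ℝ) + 1) ^ (-s.re) := by
  filter_upwards [(dirichletEta_sub_smoothedAltSum_isLittleO hs.le).bound
    (by norm_num : (0 : ℝ) < 1 / 4)] with N htail
  set a : ℕ → ℂ := fun n => (n : ℂ) ^ (-s)
  obtain ⟨hcorr_low, hcorr_up⟩ := norm_altCorrection_cpow_bounds hs.le N
  rw [hη, zero_sub, norm_neg, Real.norm_of_nonneg (by positivity)] at htail
  have hsplit : altSum a N = smoothedAltSum a N - altCorrection a N := by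
    rw [smoothedAltSum, add_sub_cancel_right]
  rw [hsplit, norm_sub_rev]
  constructor
  · linarith [norm_sub_norm_le (altCorrection a N) (smoothedAltSum a N)]
  · linarith [norm_sub_le (altCorrection a N) (smoothedAltSum a N)]

theorem tendsto_log_nat_add_one_div_log :
    Tendsto (fun N : ℕ => Real.log ((N : ℝ) + 1) / Real.log N) atTop (𝓝 1) := by
  have hinv : Tendsto (fun N : ℕ => (Real.log N)⁻¹) atTop (𝓝 0) :=
    (Real.tendsto_log_atTop.comp tendsto_natCast_atTop_atTop).inv_tendsto_atTop
  have := (Real.tendsto_log_nat_add_one_sub_log.mul hinv).const_add 1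
  rw [mul_zero, add_zero] at this
  refine this.congr' ?_
  filter_upwards [eventually_gt_atTop 1] with N hN
  have : Real.log N ≠ 0 := (Real.log_pos (by exact_mod_cast hN)).ne'
  field_simp
  ring

theorem tendsto_log_div_log_of_bounds {u : ℕ → ℝ} {β c₁ c₂ : ℝ} (hc₁ : 0 < c₁)
    (hu : ∀ᶠ N : ℕ in atTop, c₁ * ((N : ℝ) + 1) ^ (-β) ≤ u N ∧ u N ≤ c₂ * ((N : ℝ) + 1) ^ (-β)) :
    Tendsto (fun N : ℕ => Real.log (u N) / Real.log N) atTop (𝓝 (-β)) := by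
  set r : ℕ → ℝ := fun N => Real.log (u N) + β * Real.log ((N : ℝ) + 1)
  have hr : ∀ᶠ N in atTop, Real.log c₁ ≤ r N ∧ r N ≤ Real.log c₂ := by
    filter_upwards [hu] with N ⟨hlow, hup⟩
    have hpos : 0 < ((N : ℝ) + 1) ^ (-β) := by positivity
    have hlog (c : ℝ) (hc : 0 < c) :
        Real.log (c * ((N : ℝ) + 1) ^ (-β)) = Real.log c - β * Real.log ((N : ℝ) + 1) := by
      rw [Real.log_mul hc.ne' hpos.ne', Real.log_rpow (by positivity)]
      ring
    have hu_pos : 0 < u N := (mul_pos hc₁ hpos).trans_le hlow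
    have hc₂ : 0 < c₂ := pos_of_mul_pos_left (hu_pos.trans_le hup) hpos.le
    have h₁ := Real.log_le_log (by positivity) hlow
    have h₂ := Real.log_le_log hu_pos hup
    rw [hlog c₁ hc₁] at h₁
    rw [hlog c₂ hc₂] at h₂
    constructor <;> simp only [r] <;> linarith
  have hr_bdd : IsBoundedUnder (· ≤ ·) atTop fun N => ‖r N‖ :=
    isBoundedUnder_of_eventually_le (a := max |Real.log c₁| |Real.log c₂|)
      (hr.mono fun N h => abs_le_max_abs_abs h.1 h.2)
  have hinv : Tendsto (fun N : ℕ => (Real.log N)⁻¹) atTop (𝓝 0) :=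
    (Real.tendsto_log_atTop.comp tendsto_natCast_atTop_atTop).inv_tendsto_atTop
  have := (tendsto_log_nat_add_one_div_log.const_mul (-β)).add
    (hinv.zero_mul_isBoundedUnder_le hr_bdd)
  rw [mul_one, add_zero] at this
  refine this.congr fun N => ?_
  simp only [r]
  ring

/-- If `s` with `Re s = β > 0` is a zero of the Riemann zeta function, then the
partial sums `S_N(s) = ∑_{n=1}^N (-1)^{n-1} n^{-s}` satisfy
`lim_{N→∞} -(1/log₂ N) · ln |S_N(s)| = β · ln 2`. -/
theorem free_energy_at_zero (s : ℂ) (hs : 0 < s.re) (hζ : riemannZeta s = 0) :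
    Tendsto
      (fun N : ℕ =>
        -(1 / Real.logb 2 N) *
          Real.log ‖∑ n ∈ Finset.Icc 1 N, (-1 : ℂ) ^ (n + 1) * (n : ℂ) ^ (-s)‖)
      atTop (𝓝 (s.re * Real.log 2)) := by
  have hs₁ : s ≠ 1 := by
    rintro rfl
    exact riemannZeta_one_ne_zero hζ
  have hη : dirichletEta s = 0 := by rw [dirichletEta_eq_mul_riemannZeta hs hs₁, hζ, mul_zero]
  have hbounds := norm_altSum_bounds_of_dirichletEta_eq_zero hs hη
  have hlim := (tendsto_log_div_log_of_bounds (by norm_num) hbounds).const_mul (-Real.log 2)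
  rw [neg_mul_neg, mul_comm] at hlim
  refine hlim.congr fun N => ?_
  rw [Real.logb, one_div_div]
  simp only [altSum]
  ring
end

section
/- For real β > 0, integers b > β + 2m with m ≥ 1, and any r with 1 ≤ r ≤ m - 1, the ratio of consecutive terms T_b(r) = (B_{2r}·Γ(β+2r-1)/((2r)!·Γ(β)))·b^{2m-2r} satisfies |T_b(r+1)/T_b(r)| < 1/(2π²). -/
open Real Nat

private noncomputable def Zsum (k : ℕ) : ℝ := ∑' n : ℕ, 1 / (n : ℝ) ^ (2 * k)

private lemma Zsum_eq {k : ℕ} (hk : k ≠ 0) :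
    Zsum k = (-1 : ℝ) ^ (k + 1) * (2 : ℝ) ^ (2 * k - 1) * π ^ (2 * k) *
      bernoulli (2 * k) / (2 * k)! := (hasSum_zeta_nat hk).tsum_eq

private lemma Zsum_pos {k : ℕ} (hk : k ≠ 0) : 0 < Zsum k := by
  have hs := (hasSum_zeta_nat hk).summable
  have h1 : (1 : ℝ) / (1 : ℕ) ^ (2 * k) ≤ Zsum k := by
    refine Summable.le_tsum hs 1 fun j _ => by positivity
  simpa using lt_of_lt_of_le (by norm_num) h1

private lemma Zsum_antitone {k : ℕ} (hk : k ≠ 0) : Zsum (k + 1) ≤ Zsum k := by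
  refine Summable.tsum_le_tsum (fun n => ?_) (hasSum_zeta_nat (by omega)).summable
    (hasSum_zeta_nat hk).summable
  rcases Nat.eq_zero_or_pos n with hn | hn
  · subst hn
    simp [zero_pow, Nat.mul_ne_zero, hk]
  · have hn1 : (1 : ℝ) ≤ (n : ℝ) := by exact_mod_cast hn
    have : (n : ℝ) ^ (2 * k) ≤ (n : ℝ) ^ (2 * (k + 1)) :=
      pow_le_pow_right₀ hn1 (by omega)
    exact one_div_le_one_div_of_le (by positivity) this

private lemma abs_bernoulli_eq {k : ℕ} (hk : k ≠ 0) :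
    |((bernoulli (2 * k) : ℚ) : ℝ)| =
      Zsum k * (2 * k)! / ((2 : ℝ) ^ (2 * k - 1) * π ^ (2 * k)) := by
  have hz := Zsum_eq hk
  have habs : Zsum k = (2 : ℝ) ^ (2 * k - 1) * π ^ (2 * k) *
      |((bernoulli (2 * k) : ℚ) : ℝ)| / (2 * k)! := by
    have h := congrArg abs hz
    rw [abs_of_pos (Zsum_pos hk)] at h
    rw [h]
    simp only [abs_div, abs_mul, abs_pow, abs_neg, abs_one, one_pow, one_mul, Nat.abs_cast]
    rw [abs_of_pos pi_pos, abs_of_pos (show (0:ℝ) < 2 by norm_num)]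
  rw [habs]
  have hpi : π ≠ 0 := pi_ne_zero
  have hf : ((2 * k)! : ℝ) ≠ 0 := by positivity
  field_simp

/-- For real `β > 0`, integers `b > β + 2m` with `m ≥ 1`, and `1 ≤ r ≤ m - 1`,
the ratio of consecutive terms
`T_b(r) = (B_{2r} Γ(β+2r-1)/((2r)! Γ(β))) b^{2m-2r}` satisfies
`|T_b(r+1)/T_b(r)| < 1/(2π²)`. -/
theorem bernoulli_term_ratio (β : ℝ) (hβ : 0 < β) (m : ℕ) (hm : 1 ≤ m) (b : ℕ)
    (hb : β + 2 * m < (b : ℝ)) (r : ℕ) (hr : 1 ≤ r) (hrm : r ≤ m - 1) :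
    |(((bernoulli (2 * (r + 1)) : ℚ) : ℝ) * Real.Gamma (β + 2 * (r + 1) - 1) /
          ((Nat.factorial (2 * (r + 1)) : ℝ) * Real.Gamma β) * (b : ℝ) ^ (2 * m - 2 * (r + 1))) /
        (((bernoulli (2 * r) : ℚ) : ℝ) * Real.Gamma (β + 2 * r - 1) /
          ((Nat.factorial (2 * r) : ℝ) * Real.Gamma β) * (b : ℝ) ^ (2 * m - 2 * r))| <
      1 / (2 * π ^ 2) := by
  have hr1m : r + 1 ≤ m := by omega
  have hrR : (1 : ℝ) ≤ (r : ℝ) := by exact_mod_cast hr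
  set c : ℝ := β + 2 * r - 1 with hc_def
  have hc : 0 < c := by simp only [hc_def]; linarith
  have hbpos : (0 : ℝ) < (b : ℝ) := by
    have : (0:ℝ) < β + 2 * m := by positivity
    linarith
  have hcb : c + 1 < (b : ℝ) := by
    have : (r : ℝ) + 1 ≤ (m : ℝ) := by exact_mod_cast hr1m
    simp only [hc_def]; linarith
  have hG1pos : 0 < Real.Gamma c := Real.Gamma_pos_of_pos hc
  have hGβpos : 0 < Real.Gamma β := Real.Gamma_pos_of_pos hβ
  -- Gamma identity
  have hGamma2 : Real.Gamma (β + 2 * ((r : ℝ) + 1) - 1) = (c + 1) * (c * Real.Gamma c) := by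
    rw [show β + 2 * ((r:ℝ) + 1) - 1 = c + 1 + 1 by simp only [hc_def]; ring,
      Real.Gamma_add_one (by positivity), Real.Gamma_add_one hc.ne']
  -- factorial identity
  have hF : ((2 * (r + 1))! : ℝ) = (2 * r + 2) * ((2 * r + 1) * (2 * r)!) := by
    have : 2 * (r + 1) = (2 * r + 1) + 1 := by omega
    rw [this, Nat.factorial_succ, Nat.factorial_succ]
    push_cast; ring
  -- power identity
  have hpow : (b : ℝ) ^ (2 * m - 2 * r) = (b : ℝ) ^ (2 * m - 2 * (r + 1)) * (b:ℝ) ^ 2 := by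
    rw [← pow_add]
    congr 1
    omega
  rw [hGamma2, hF, hpow]
  set bp : ℝ := (b : ℝ) ^ (2 * m - 2 * (r + 1)) with hbp_def
  have hbppos : 0 < bp := by positivity
  set B2 : ℝ := ((bernoulli (2 * (r + 1)) : ℚ) : ℝ) with hB2_def
  set B1 : ℝ := ((bernoulli (2 * r) : ℚ) : ℝ) with hB1_def
  have hF1pos : (0:ℝ) < ((2 * r)! : ℝ) := by positivity
  have hZ1 : 0 < Zsum r := Zsum_pos (by omega)
  have hZ2 : 0 < Zsum (r + 1) := Zsum_pos (by omega)
  have hB1 : |B1| = Zsum r * (2 * r)! / ((2 : ℝ) ^ (2 * r - 1) * π ^ (2 * r)) :=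
    abs_bernoulli_eq (by omega)
  have hB2 : |B2| = Zsum (r+1) * (2 * (r+1))! / ((2 : ℝ) ^ (2 * (r+1) - 1) * π ^ (2 * (r+1))) :=
    abs_bernoulli_eq (by omega)
  have hpi : (0:ℝ) < π := pi_pos
  have hB1ne : B1 ≠ 0 := by
    rw [← abs_pos, hB1]
    exact div_pos (mul_pos hZ1 hF1pos) (by positivity)
  -- rewrite the quotient
  have hX : B2 * ((c + 1) * (c * Real.Gamma c)) /
        ((2 * (r:ℝ) + 2) * ((2 * (r:ℝ) + 1) * ((2 * r)! : ℝ)) * Real.Gamma β) * bp /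
        (B1 * Real.Gamma c / (((2 * r)! : ℝ) * Real.Gamma β) * (bp * (b:ℝ) ^ 2)) =
      B2 / B1 * ((c + 1) * c) / ((2 * (r:ℝ) + 2) * (2 * (r:ℝ) + 1) * (b:ℝ) ^ 2) := by
    field_simp
  rw [hX, abs_div, abs_mul, abs_div,
    abs_of_pos (show (0:ℝ) < (c + 1) * c by positivity),
    abs_of_pos (show (0:ℝ) < (2 * (r:ℝ) + 2) * (2 * (r:ℝ) + 1) * (b:ℝ) ^ 2 by positivity)]
  have key : |B2| / |B1| * ((c + 1) * c) / ((2 * (r:ℝ) + 2) * (2 * (r:ℝ) + 1) * (b:ℝ) ^ 2) =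
      Zsum (r+1) / Zsum r * ((c + 1) * c) / (2 ^ 2 * π ^ 2 * (b:ℝ) ^ 2) := by
    rw [hB1, hB2, hF]
    have e1 : 2 * (r + 1) - 1 = (2 * r - 1) + 2 := by omega
    have e2 : 2 * (r + 1) = 2 * r + 2 := by omega
    rw [e1, e2, pow_add, pow_add]
    have h2p : (0:ℝ) < (2:ℝ) ^ (2 * r - 1) := by positivity
    field_simp
  rw [key]
  -- final bound
  have hZle : Zsum (r+1) / Zsum r ≤ 1 := (div_le_one hZ1).mpr (Zsum_antitone (by omega))
  have hprod : (c + 1) * c < (b:ℝ) ^ 2 := by nlinarith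
  have hX0 : (0:ℝ) ≤ (c + 1) * c := by positivity
  calc Zsum (r+1) / Zsum r * ((c + 1) * c) / (2 ^ 2 * π ^ 2 * (b:ℝ) ^ 2)
      ≤ 1 * ((c + 1) * c) / (2 ^ 2 * π ^ 2 * (b:ℝ) ^ 2) := by gcongr
    _ < 1 * ((b:ℝ) ^ 2) / (2 ^ 2 * π ^ 2 * (b:ℝ) ^ 2) := by
        rw [one_mul, one_mul]
        gcongr
    _ = 1 / (2 ^ 2 * π ^ 2) := by
        rw [one_mul]
        field_simp
    _ < 1 / (2 * π ^ 2) := by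
        apply one_div_lt_one_div_of_lt
        · positivity
        · have h2 : (0:ℝ) < π ^ 2 := by positivity
          norm_num
          linarith
end

section
/- Let complex unit vectors u, v in a Hilbert space and real numbers p = ‖Pu‖², q = ‖Pv‖² for an orthogonal projection P, with p ≥ 1/2 and ‖u - v‖ ≤ ε/6 for some 0 < ε ≤ 1. Then q ≥ 1/2 - ε/3, and if q > 0 the normalized projected states satisfy ‖Pu/‖Pu‖ - Pv/‖Pv‖‖ ≤ (1+2√2)/(3√2) · ε < ε. -/
/-!
A symmetric idempotent is a contraction, so `‖P u - P v‖ ≤ ‖u - v‖ ≤ ε/6`. Since `‖P u‖, ‖P v‖ ≤ 1`,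
`‖P u‖² - ‖P v‖² ≤ ‖P u - P v‖ (‖P u‖ + ‖P v‖) ≤ ε/3`. Normalizing a vector `x` moves it by at most
`2‖x - y‖/‖x‖` relative to the normalization of `y`, and `‖P u‖ ≥ 1/√2`, which gives
`‖P u/‖P u‖ - P v/‖P v‖‖ ≤ √2 ε/3`, below the claimed constant.
-/

section InnerProductSpace

variable {𝕜 E : Type*} [RCLike 𝕜] [NormedAddCommGroup E] [InnerProductSpace 𝕜 E] [CompleteSpace E]

theorem ContinuousLinearMap.isStarProjection_of_idempotent_of_symmetric {P : E →L[𝕜] E}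
    (hidem : ∀ x, P (P x) = P x) (hsym : ∀ x y, inner 𝕜 (P x) y = inner 𝕜 x (P y)) :
    IsStarProjection P :=
  isStarProjection_iff_isSymmetricProjection.mpr ⟨LinearMap.ext hidem, hsym⟩

theorem IsStarProjection.norm_apply_le {P : E →L[𝕜] E} (hP : IsStarProjection P) (x : E) :
    ‖P x‖ ≤ ‖x‖ := by
  simpa using P.le_of_opNorm_le hP.norm_le x

end InnerProductSpace

theorem sq_norm_sub_sq_norm_le {E : Type*} [SeminormedAddCommGroup E] (x y : E) :
    ‖x‖ ^ 2 - ‖y‖ ^ 2 ≤ ‖x - y‖ * (‖x‖ + ‖y‖) :=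
  calc ‖x‖ ^ 2 - ‖y‖ ^ 2 = (‖x‖ - ‖y‖) * (‖x‖ + ‖y‖) := by ring
    _ ≤ ‖x - y‖ * (‖x‖ + ‖y‖) := by gcongr; exact norm_sub_norm_le x y

namespace NormedSpace

theorem norm_normalize_sub_normalize_le {V : Type*} [NormedAddCommGroup V] [NormedSpace ℝ V]
    {x : V} (hx : x ≠ 0) (y : V) :
    ‖normalize x - normalize y‖ ≤ 2 * ‖x - y‖ / ‖x‖ := by
  have hx_pos : 0 < ‖x‖ := norm_pos_iff.mpr hx
  have hdecomp : normalize x - normalize y =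
      ‖x‖⁻¹ • ((x - y) + (‖y‖ - ‖x‖) • normalize y) := by
    rw [sub_smul, norm_smul_normalize, smul_add, smul_sub, smul_sub, smul_smul,
      inv_mul_cancel₀ hx_pos.ne', one_smul]
    simp only [normalize]
    abel
  have hny : ‖normalize y‖ ≤ 1 := by
    rcases eq_or_ne y 0 with rfl | hy
    · simp [normalize_zero_eq_zero]
    · exact (norm_normalize hy).le
  have hcorr : ‖(‖y‖ - ‖x‖) • normalize y‖ ≤ ‖x - y‖ :=
    calc ‖(‖y‖ - ‖x‖) • normalize y‖ = |‖y‖ - ‖x‖| * ‖normalize y‖ := by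
          rw [norm_smul, Real.norm_eq_abs]
      _ ≤ ‖y - x‖ * 1 := by gcongr; exact abs_norm_sub_norm_le y x
      _ = ‖x - y‖ := by rw [mul_one, norm_sub_rev]
  rw [hdecomp, norm_smul, norm_inv, norm_norm, inv_mul_eq_div]
  gcongr
  linarith [norm_add_le (x - y) ((‖y‖ - ‖x‖) • normalize y)]

end NormedSpace

theorem one_le_sqrt_two_mul_of_half_le_sq {a : ℝ} (ha : 0 ≤ a) (h : 1 / 2 ≤ a ^ 2) :
    1 ≤ √2 * a := by
  refine le_of_pow_le_pow_left₀ two_ne_zero (by positivity) ?_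
  rw [mul_pow, Real.sq_sqrt zero_le_two]
  linarith

theorem sqrt_two_div_three_le_one_add_two_mul_sqrt_two_div :
    √2 / 3 ≤ (1 + 2 * √2) / (3 * √2) := by
  rw [div_le_div_iff₀ (by norm_num) (by positivity)]
  nlinarith [Real.mul_self_sqrt zero_le_two, Real.sqrt_nonneg 2]

theorem one_add_two_mul_sqrt_two_div_lt_one : (1 + 2 * √2) / (3 * √2) < 1 := by
  rw [div_lt_one (by positivity)]
  linarith [Real.one_lt_sqrt_two]

theorem projected_state_stability_general {E : Type*} [NormedAddCommGroup E] [InnerProductSpace ℂ E]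
    [CompleteSpace E] (P : E →L[ℂ] E)
    (hidem : ∀ x, P (P x) = P x)
    (hsa : ∀ x y : E, (inner ℂ (P x) y : ℂ) = inner ℂ x (P y))
    (u v : E) (hu : ‖u‖ = 1) (hv : ‖v‖ = 1)
    (ε : ℝ) (hε0 : 0 < ε)
    (hp : (1 : ℝ) / 2 ≤ ‖P u‖ ^ 2) (hd : ‖u - v‖ ≤ ε / 6) :
    (1 : ℝ) / 2 - ε / 3 ≤ ‖P v‖ ^ 2 ∧
      (0 < ‖P v‖ ^ 2 →
        ‖(‖P u‖ : ℝ)⁻¹ • P u - (‖P v‖ : ℝ)⁻¹ • P v‖ ≤ (1 + 2 * Real.sqrt 2) / (3 * Real.sqrt 2) * ε ∧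
          (1 + 2 * Real.sqrt 2) / (3 * Real.sqrt 2) * ε < ε) := by
  have hP := (P.isStarProjection_of_idempotent_of_symmetric hidem hsa).norm_apply_le
  have hPuv : ‖P u - P v‖ ≤ ε / 6 := by
    rw [← map_sub]
    exact (hP _).trans hd
  have hq : 1 / 2 - ε / 3 ≤ ‖P v‖ ^ 2 := by
    nlinarith [sq_norm_sub_sq_norm_le (P u) (P v), hP u, hP v, norm_nonneg (P u - P v)]
  have hPu : 1 ≤ √2 * ‖P u‖ := one_le_sqrt_two_mul_of_half_le_sq (norm_nonneg _) hp
  have hPu_pos : 0 < ‖P u‖ := by nlinarith [norm_nonneg (P u)]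
  refine ⟨hq, fun _ => ⟨?_, mul_lt_of_lt_one_left hε0 one_add_two_mul_sqrt_two_div_lt_one⟩⟩
  calc ‖‖P u‖⁻¹ • P u - ‖P v‖⁻¹ • P v‖
        = ‖NormedSpace.normalize (P u) - NormedSpace.normalize (P v)‖ := rfl
    _ ≤ 2 * ‖P u - P v‖ / ‖P u‖ :=
        NormedSpace.norm_normalize_sub_normalize_le (norm_pos_iff.mp hPu_pos) _
    _ ≤ √2 * ε / 3 := by
        rw [div_le_iff₀ (by positivity)]
        nlinarith
    _ ≤ (1 + 2 * √2) / (3 * √2) * ε := by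
        rw [mul_div_right_comm]
        exact mul_le_mul_of_nonneg_right sqrt_two_div_three_le_one_add_two_mul_sqrt_two_div hε0.le

/-- Let `P` be an orthogonal projection on a complex Hilbert space, `u, v` unit
vectors with `‖Pu‖² ≥ 1/2` and `‖u - v‖ ≤ ε/6` for some `0 < ε ≤ 1`. Then
`‖Pv‖² ≥ 1/2 - ε/3`, and if `‖Pv‖² > 0`, the normalized projected states satisfy
`‖Pu/‖Pu‖ - Pv/‖Pv‖‖ ≤ (1+2√2)/(3√2)·ε < ε`. -/
theorem projected_state_stability {E : Type*} [NormedAddCommGroup E] [InnerProductSpace ℂ E]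
    [CompleteSpace E] (P : E →L[ℂ] E)
    (hidem : ∀ x, P (P x) = P x)
    (hsa : ∀ x y : E, (inner ℂ (P x) y : ℂ) = inner ℂ x (P y))
    (u v : E) (hu : ‖u‖ = 1) (hv : ‖v‖ = 1)
    (ε : ℝ) (hε0 : 0 < ε) (hε1 : ε ≤ 1)
    (hp : (1 : ℝ) / 2 ≤ ‖P u‖ ^ 2) (hd : ‖u - v‖ ≤ ε / 6) :
    (1 : ℝ) / 2 - ε / 3 ≤ ‖P v‖ ^ 2 ∧
      (0 < ‖P v‖ ^ 2 →
        ‖(‖P u‖ : ℝ)⁻¹ • P u - (‖P v‖ : ℝ)⁻¹ • P v‖ ≤ (1 + 2 * Real.sqrt 2) / (3 * Real.sqrt 2) * ε ∧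
          (1 + 2 * Real.sqrt 2) / (3 * Real.sqrt 2) * ε < ε) :=
  projected_state_stability_general P hidem hsa u v hu hv ε hε0 hp hd
end
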